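/- Define ρ(z) = log((1 + (1 − z²)^{1/2})/z) − (1 − z²)^{1/2} for z ∈ ℂ, using the principal branches of log and the square root. Let Ω ⊂ ℂ be a compact subset of the open upper half-plane {z : Im z > 0} such that for every z ∈ Ω one has 1 − z² ∉ (−∞, 0] and (1 + (1 − z²)^{1/2})/z ∉ (−∞, 0]. Let V₀ > 0. Then there exist constants C > 0 and ν₀ > 0 such that for all real ν ≥ ν₀ and all z ∈ Ω, | ρ(z̃) − ρ(z) − V₀ (1 − z²)^{1/2} / (2 ν² z²) | ≤ C / ν⁴, where z̃ = z (1 − V₀/(ν² z²))^{1/2} with the principal square root. -/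

import Mathlib

open Complex

/-- The phase function `ρ(z) = log((1 + (1 − z²)^{1/2})/z) − (1 − z²)^{1/2}` of the uniform
(Olver) asymptotics of Bessel functions of large order, with principal branches of the
logarithm and the square root. -/
noncomputable def olverRho (z : ℂ) : ℂ :=
  Complex.log ((1 + (1 - z ^ 2) ^ ((1 : ℂ) / 2)) / z) - (1 - z ^ 2) ^ ((1 : ℂ) / 2)

/-- The rescaled variable `z̃ = z (1 − V₀/(ν² z²))^{1/2}`, i.e. `z̃(z) = (z² − V₀/ν²)^{1/2}`,
carrying the information about the step potential of height `V₀`. -/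
noncomputable def ztilde (V₀ ν : ℝ) (z : ℂ) : ℂ :=
  z * (1 - (V₀ : ℂ) / ((ν : ℂ) ^ 2 * z ^ 2)) ^ ((1 : ℂ) / 2)

/-! Put `w = V₀/ν²`, so that `z̃ = zShift z w`. Since `ρ'(ζ) = -(1 - ζ²)^{1/2}/ζ` and
`∂z̃/∂w = -1/(2z̃)`, the function `F(w) = ρ(zShift z w)` has
`F'(w) = (1 - z² + w)^{1/2}/(2(z² - w))`, and the claim is the second-order Taylor estimate
`‖F(w) - F(0) - w F'(0)‖ ≤ M ‖w‖²`. The hypotheses say that `Ω` lies in the open set where the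
principal branches in `ρ` are holomorphic; by compactness of `Ω` (tube lemma) there is a disc
around `w = 0` on which `zShift z w` stays in that set and `F''` is bounded, uniformly in `z ∈ Ω`.
-/

open Filter Topology

theorem Convex.norm_image_sub_sub_smul_le {𝕜 E : Type*} [RCLike 𝕜] [NormedAddCommGroup E]
    [NormedSpace 𝕜 E] {f f' f'' : 𝕜 → E} {s : Set 𝕜} (hs : Convex ℝ s)
    (hf : ∀ w ∈ s, HasDerivWithinAt f (f' w) s w)
    (hf' : ∀ w ∈ s, HasDerivWithinAt f' (f'' w) s w) {M : ℝ} (hM : ∀ w ∈ s, ‖f'' w‖ ≤ M)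
    {x y : 𝕜} (hx : x ∈ s) (hy : y ∈ s) :
    ‖f y - f x - (y - x) • f' x‖ ≤ M * ‖y - x‖ ^ 2 := by
  set t := s ∩ Metric.closedBall x ‖y - x‖
  have ht : Convex ℝ t := hs.inter (convex_closedBall x _)
  have hxt : x ∈ t := ⟨hx, Metric.mem_closedBall_self (norm_nonneg _)⟩
  have hyt : y ∈ t := ⟨hy, by simp [dist_eq_norm]⟩
  have hf'_lip : ∀ w ∈ t, ‖f' w - f' x‖ ≤ M * ‖y - x‖ := fun w hw =>
    calc ‖f' w - f' x‖ ≤ M * ‖w - x‖ :=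
          hs.norm_image_sub_le_of_norm_hasDerivWithin_le hf' hM hx hw.1
      _ ≤ M * ‖y - x‖ := by
          gcongr
          · exact (norm_nonneg _).trans (hM x hx)
          · simpa [dist_eq_norm] using hw.2
  have hg : ∀ w ∈ t, HasDerivWithinAt (fun v => f v - (v - x) • f' x) (f' w - f' x) t w := by
    intro w hw
    exact (((hf w hw.1).mono Set.inter_subset_left).sub
      (((hasDerivAt_id w).sub_const x).smul_const (f' x)).hasDerivWithinAt).congr_deriv (by simp)
  simpa [sub_right_comm, pow_two, mul_assoc] using
    ht.norm_image_sub_le_of_norm_hasDerivWithin_le hg hf'_lip hxt hyt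

theorem cpow_one_half_sq (w : ℂ) : (w ^ ((1 : ℂ) / 2)) ^ 2 = w := by
  rw [one_div]; exact cpow_ofNat_inv_pow w 2

theorem hasDerivAt_cpow_one_half {w : ℂ} (hw : w ∈ slitPlane) :
    HasDerivAt (fun x : ℂ => x ^ ((1 : ℂ) / 2)) (1 / (2 * w ^ ((1 : ℂ) / 2))) w := by
  have hw0 : w ≠ 0 := slitPlane_ne_zero hw
  have hs : w ^ ((1 : ℂ) / 2) ≠ 0 := by simp [cpow_eq_zero_iff, hw0]
  refine (hasStrictDerivAt_cpow_const (c := (1 : ℂ) / 2) hw).hasDerivAt.congr_deriv ?_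
  rw [cpow_sub _ _ hw0, cpow_one]
  field_simp
  linear_combination cpow_one_half_sq w

noncomputable def olverDomain : Set ℂ :=
  {ζ | 1 - ζ ^ 2 ∈ slitPlane ∧ (1 + (1 - ζ ^ 2) ^ ((1 : ℂ) / 2)) / ζ ∈ slitPlane}

theorem ne_zero_of_mem_olverDomain {ζ : ℂ} (hζ : ζ ∈ olverDomain) : ζ ≠ 0 := by
  rintro rfl
  -- division by zero returns `0`, which is not in the slit plane
  simpa using hζ.2

theorem isOpen_olverDomain : IsOpen olverDomain := by
  refine isOpen_iff_mem_nhds.2 fun ζ hζ => ?_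
  have h1 : ContinuousAt (fun ζ : ℂ => 1 - ζ ^ 2) ζ := by fun_prop
  have h2 : ContinuousAt (fun ζ : ℂ => (1 + (1 - ζ ^ 2) ^ ((1 : ℂ) / 2)) / ζ) ζ :=
    (continuousAt_const.add (h1.cpow continuousAt_const hζ.1)).div continuousAt_id
      (ne_zero_of_mem_olverDomain hζ)
  exact (h1.eventually (isOpen_slitPlane.mem_nhds hζ.1)).and
    (h2.eventually (isOpen_slitPlane.mem_nhds hζ.2))

theorem hasDerivAt_olverRho {ζ : ℂ} (hζ : ζ ∈ olverDomain) :
    HasDerivAt olverRho (-(1 - ζ ^ 2) ^ ((1 : ℂ) / 2) / ζ) ζ := by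
  have hζ0 := ne_zero_of_mem_olverDomain hζ
  set s := (1 - ζ ^ 2) ^ ((1 : ℂ) / 2) with hs
  have hs2 : s ^ 2 = 1 - ζ ^ 2 := cpow_one_half_sq _
  have hs0 : s ≠ 0 := by simp [s, cpow_eq_zero_iff, slitPlane_ne_zero hζ.1]
  have hs1 : 1 + s ≠ 0 := fun h => slitPlane_ne_zero hζ.2 (by rw [h, zero_div])
  have hA : HasDerivAt (fun x : ℂ => 1 - x ^ 2) (-(2 * ζ)) ζ := by
    simpa using (hasDerivAt_pow 2 ζ).const_sub 1
  have hsd : HasDerivAt (fun x : ℂ => (1 - x ^ 2) ^ ((1 : ℂ) / 2)) (1 / (2 * s) * -(2 * ζ)) ζ :=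
    (hasDerivAt_cpow_one_half hζ.1).comp ζ hA (h₂ := fun x => x ^ ((1 : ℂ) / 2))
  have hρ : HasDerivAt olverRho _ ζ :=
    (((hsd.const_add 1).div (hasDerivAt_id ζ) hζ0).clog hζ.2).sub hsd
  refine hρ.congr_deriv ?_
  simp only [Pi.div_apply, id, ← hs]
  field_simp
  linear_combination s * hs2

noncomputable def zShift (z w : ℂ) : ℂ := z * (1 - w / z ^ 2) ^ ((1 : ℂ) / 2)

theorem zShift_zero (z : ℂ) : zShift z 0 = z := by simp [zShift]

theorem ztilde_eq_zShift (V₀ ν : ℝ) (z : ℂ) :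
    ztilde V₀ ν z = zShift z ((V₀ / ν ^ 2 : ℝ) : ℂ) := by
  simp [ztilde, zShift, div_div]

theorem zShift_sq {z : ℂ} (hz : z ≠ 0) (w : ℂ) : zShift z w ^ 2 = z ^ 2 - w := by
  rw [zShift, mul_pow, cpow_one_half_sq]
  field_simp

theorem hasDerivAt_zShift {z w : ℂ} (hz : z ≠ 0) (hw : 1 - w / z ^ 2 ∈ slitPlane) :
    HasDerivAt (zShift z) (-1 / (2 * zShift z w)) w := by
  have hB : HasDerivAt (fun x : ℂ => 1 - x / z ^ 2) (-(1 / z ^ 2)) w := by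
    simpa using ((hasDerivAt_id w).div_const (z ^ 2)).const_sub 1
  refine (((hasDerivAt_cpow_one_half hw).comp w hB
    (h₂ := fun x => x ^ ((1 : ℂ) / 2))).const_mul z).congr_deriv ?_
  simp only [zShift]
  field_simp

noncomputable def rhoShiftDeriv (z w : ℂ) : ℂ := (1 - z ^ 2 + w) ^ ((1 : ℂ) / 2) / (2 * (z ^ 2 - w))

noncomputable def rhoShiftDeriv2 (z w : ℂ) : ℂ :=
  1 / (4 * (1 - z ^ 2 + w) ^ ((1 : ℂ) / 2) * (z ^ 2 - w)) +
    (1 - z ^ 2 + w) ^ ((1 : ℂ) / 2) / (2 * (z ^ 2 - w) ^ 2)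

theorem hasDerivAt_olverRho_zShift {z w : ℂ} (hw : 1 - w / z ^ 2 ∈ slitPlane)
    (hζ : zShift z w ∈ olverDomain) :
    HasDerivAt (fun w => olverRho (zShift z w)) (rhoShiftDeriv z w) w := by
  have hz : z ≠ 0 := left_ne_zero_of_mul (ne_zero_of_mem_olverDomain hζ)
  refine ((hasDerivAt_olverRho hζ).comp w (hasDerivAt_zShift hz hw)).congr_deriv ?_
  have hsq := zShift_sq hz w
  rw [rhoShiftDeriv, ← hsq, show 1 - z ^ 2 + w = 1 - zShift z w ^ 2 by rw [hsq]; ring]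
  field_simp

theorem hasDerivAt_rhoShiftDeriv {z w : ℂ} (hA : 1 - z ^ 2 + w ∈ slitPlane)
    (hB : z ^ 2 - w ≠ 0) : HasDerivAt (rhoShiftDeriv z) (rhoShiftDeriv2 z w) w := by
  have hs : HasDerivAt (fun x : ℂ => (1 - z ^ 2 + x) ^ ((1 : ℂ) / 2))
      (1 / (2 * (1 - z ^ 2 + w) ^ ((1 : ℂ) / 2)) * 1) w :=
    (hasDerivAt_cpow_one_half hA).comp w ((hasDerivAt_id w).const_add _)
      (h₂ := fun x => x ^ ((1 : ℂ) / 2))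
  have hd : HasDerivAt (fun x : ℂ => 2 * (z ^ 2 - x)) (-2) w := by
    simpa using ((hasDerivAt_id w).const_sub (z ^ 2)).const_mul 2
  refine (hs.div hd (mul_ne_zero two_ne_zero hB)).congr_deriv ?_
  rw [rhoShiftDeriv2]
  field_simp
  ring

theorem continuousAt_rhoShiftDeriv2 {z : ℂ} (hz : z ∈ olverDomain) :
    ContinuousAt (fun p : ℂ × ℂ => rhoShiftDeriv2 p.2 p.1) (0, z) := by
  have hz0 := ne_zero_of_mem_olverDomain hz
  have hA : ContinuousAt (fun p : ℂ × ℂ => 1 - p.2 ^ 2 + p.1) (0, z) := by fun_prop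
  have hs := hA.cpow continuousAt_const (by simpa using hz.1) (g := fun _ => (1 : ℂ) / 2)
  have hB : ContinuousAt (fun p : ℂ × ℂ => p.2 ^ 2 - p.1) (0, z) := by fun_prop
  unfold rhoShiftDeriv2
  exact (continuousAt_const.div ((continuousAt_const.mul hs).mul hB)
    (by simp [hz0, slitPlane_ne_zero hz.1])).add
    (hs.div (continuousAt_const.mul (hB.pow 2)) (by simp [hz0]))

theorem IsCompact.exists_pos_bound_eventually_forall {X Y E : Type*} [TopologicalSpace X]
    [TopologicalSpace Y] [SeminormedAddGroup E] {K : Set Y} (hK : IsCompact K) {x₀ : X}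
    {f : X × Y → E} (hf : ∀ y ∈ K, ContinuousAt f (x₀, y)) :
    ∃ M > 0, ∀ᶠ x in 𝓝 x₀, ∀ y ∈ K, ‖f (x, y)‖ ≤ M := by
  have hcont : ContinuousOn (fun y => f (x₀, y)) K := fun y hy =>
    ((hf y hy).comp (Continuous.prodMk_right x₀).continuousAt).continuousWithinAt
  obtain ⟨M, hM⟩ := hK.exists_bound_of_continuousOn hcont
  refine ⟨max M 0 + 1, by positivity, ?_⟩
  refine hK.eventually_forall_of_forall_eventually fun y hy => ?_
  refine (hf y hy).norm.eventually (eventually_le_nhds ?_)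
  exact (hM y hy).trans_lt (by linarith [le_max_left M 0])

theorem exists_bound_eventually_zShift_mem_olverDomain {Ω : Set ℂ} (hΩc : IsCompact Ω)
    (hΩ : Ω ⊆ olverDomain) :
    ∃ M > 0, ∀ᶠ w in 𝓝 (0 : ℂ), ∀ z ∈ Ω,
      1 - w / z ^ 2 ∈ slitPlane ∧ zShift z w ∈ olverDomain ∧ ‖rhoShiftDeriv2 z w‖ ≤ M := by
  obtain ⟨M, hM0, hM⟩ := hΩc.exists_pos_bound_eventually_forall
    fun z hz => continuousAt_rhoShiftDeriv2 (hΩ hz)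
  have hdom : ∀ᶠ w in 𝓝 (0 : ℂ), ∀ z ∈ Ω,
      1 - w / z ^ 2 ∈ slitPlane ∧ zShift z w ∈ olverDomain := by
    refine hΩc.eventually_forall_of_forall_eventually fun z hz => ?_
    have hz0 := ne_zero_of_mem_olverDomain (hΩ hz)
    have hB : ContinuousAt (fun p : ℂ × ℂ => 1 - p.1 / p.2 ^ 2) (0, z) :=
      continuousAt_const.sub (continuousAt_fst.div (continuousAt_snd.pow 2) (by simp [hz0]))
    have hB1 : (1 : ℂ) - (0, z).1 / (0, z).2 ^ 2 ∈ slitPlane := by simp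
    have hζ : ContinuousAt (fun p : ℂ × ℂ => zShift p.2 p.1) (0, z) :=
      continuousAt_snd.mul (hB.cpow continuousAt_const hB1 (g := fun _ => (1 : ℂ) / 2))
    exact (hB.eventually (isOpen_slitPlane.mem_nhds hB1)).and
      (hζ.eventually (isOpen_olverDomain.mem_nhds (by simpa [zShift_zero] using hΩ hz)))
  exact ⟨M, hM0, (hdom.and hM).mono fun w hw z hz => ⟨(hw.1 z hz).1, (hw.1 z hz).2, hw.2 z hz⟩⟩

theorem exists_norm_olverRho_zShift_sub_le {Ω : Set ℂ} (hΩc : IsCompact Ω)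
    (hΩ : Ω ⊆ olverDomain) :
    ∃ M > 0, ∀ᶠ w in 𝓝 (0 : ℂ), ∀ z ∈ Ω,
      ‖olverRho (zShift z w) - olverRho z - w * rhoShiftDeriv z 0‖ ≤ M * ‖w‖ ^ 2 := by
  obtain ⟨M, hM0, hM⟩ := exists_bound_eventually_zShift_mem_olverDomain hΩc hΩ
  obtain ⟨r, hr, hball⟩ := Metric.eventually_nhds_iff_ball.1 hM
  refine ⟨M, hM0, Metric.eventually_nhds_iff_ball.2 ⟨r, hr, fun w hw z hz => ?_⟩⟩
  have hderiv : ∀ v ∈ Metric.ball (0 : ℂ) r,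
      HasDerivAt (fun w => olverRho (zShift z w)) (rhoShiftDeriv z v) v ∧
        HasDerivAt (rhoShiftDeriv z) (rhoShiftDeriv2 z v) v := by
    intro v hv
    obtain ⟨hv1, hζ, -⟩ := hball v hv z hz
    have hz0 : z ≠ 0 := left_ne_zero_of_mul (ne_zero_of_mem_olverDomain hζ)
    have hA : 1 - z ^ 2 + v ∈ slitPlane := by
      convert hζ.1 using 1
      rw [zShift_sq hz0]
      ring
    have hB : z ^ 2 - v ≠ 0 := zShift_sq hz0 v ▸ pow_ne_zero 2 (ne_zero_of_mem_olverDomain hζ)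
    exact ⟨hasDerivAt_olverRho_zShift hv1 hζ, hasDerivAt_rhoShiftDeriv hA hB⟩
  simpa [zShift_zero] using (convex_ball (0 : ℂ) r).norm_image_sub_sub_smul_le
    (fun v hv => (hderiv v hv).1.hasDerivWithinAt) (fun v hv => (hderiv v hv).2.hasDerivWithinAt)
    (fun v hv => (hball v hv z hz).2.2) (Metric.mem_ball_self hr) hw

theorem stmt8_general (V₀ : ℝ) (hV₀ : 0 < V₀) (Ω : Set ℂ) (hΩc : IsCompact Ω)
    (h1 : ∀ z ∈ Ω, (1 - z ^ 2) ∈ Complex.slitPlane)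
    (h2 : ∀ z ∈ Ω, (1 + (1 - z ^ 2) ^ ((1 : ℂ) / 2)) / z ∈ Complex.slitPlane) :
    ∃ C > 0, ∃ ν₀ > 0, ∀ ν : ℝ, ν₀ ≤ ν → ∀ z ∈ Ω,
      ‖olverRho (ztilde V₀ ν z) - olverRho z
            - (V₀ : ℂ) * (1 - z ^ 2) ^ ((1 : ℂ) / 2) / (2 * (ν : ℂ) ^ 2 * z ^ 2)‖
        ≤ C / ν ^ 4 := by
  obtain ⟨M, hM0, hM⟩ := exists_norm_olverRho_zShift_sub_le hΩc fun z hz => ⟨h1 z hz, h2 z hz⟩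
  have hw : Tendsto (fun ν : ℝ => ((V₀ / ν ^ 2 : ℝ) : ℂ)) atTop (𝓝 0) := by
    rw [← ofReal_zero]
    exact (continuous_ofReal.tendsto 0).comp
      ((tendsto_const_nhds (x := V₀)).div_atTop (tendsto_pow_atTop two_ne_zero))
  obtain ⟨ν₀, hν₀⟩ := eventually_atTop.1 (hw.eventually hM)
  refine ⟨M * V₀ ^ 2, by positivity, max ν₀ 1, lt_max_of_lt_right one_pos, fun ν hν z hz => ?_⟩
  calc _ = ‖olverRho (zShift z ((V₀ / ν ^ 2 : ℝ) : ℂ)) - olverRho z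
          - ((V₀ / ν ^ 2 : ℝ) : ℂ) * rhoShiftDeriv z 0‖ := by
        rw [ztilde_eq_zShift, rhoShiftDeriv]
        push_cast
        ring_nf
    _ ≤ M * ‖((V₀ / ν ^ 2 : ℝ) : ℂ)‖ ^ 2 := hν₀ ν (le_of_max_le_left hν) z hz
    _ = M * V₀ ^ 2 / ν ^ 4 := by
        rw [norm_real, Real.norm_eq_abs, sq_abs]
        ring

/-- Let `Ω` be a compact subset of the open upper half-plane such that for
every `z ∈ Ω`, `1 − z² ∉ (−∞, 0]` and `(1 + (1 − z²)^{1/2})/z ∉ (−∞, 0]`. Let `V₀ > 0`.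
Then there are `C > 0` and `ν₀ > 0` such that for all real `ν ≥ ν₀` and all `z ∈ Ω`,
`|ρ(z̃) − ρ(z) − V₀ (1 − z²)^{1/2}/(2 ν² z²)| ≤ C/ν⁴`. -/
theorem stmt8 (V₀ : ℝ) (hV₀ : 0 < V₀) (Ω : Set ℂ) (hΩc : IsCompact Ω)
    (hΩup : ∀ z ∈ Ω, 0 < z.im)
    (h1 : ∀ z ∈ Ω, (1 - z ^ 2) ∈ Complex.slitPlane)
    (h2 : ∀ z ∈ Ω, (1 + (1 - z ^ 2) ^ ((1 : ℂ) / 2)) / z ∈ Complex.slitPlane) :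
    ∃ C > 0, ∃ ν₀ > 0, ∀ ν : ℝ, ν₀ ≤ ν → ∀ z ∈ Ω,
      ‖olverRho (ztilde V₀ ν z) - olverRho z
            - (V₀ : ℂ) * (1 - z ^ 2) ^ ((1 : ℂ) / 2) / (2 * (ν : ℂ) ^ 2 * z ^ 2)‖
        ≤ C / ν ^ 4 :=
  stmt8_general V₀ hV₀ Ω hΩc h1 h2
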